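/- (Proposition 1) Consider an N-periodic dressing chain and write its transition matrix as T(λ) = [[A(λ), B(λ)], [C(λ), D(λ)]], with P(λ) = tr T(λ) and Q(λ) = det T(λ); these entries are polynomials in λ whose coefficients are functions of x. Let J ⊆ ℝ be an open interval and let λ_j, z_j : J → ℝ be differentiable functions such that for all x ∈ J: B(x, λ_j(x)) = 0, z_j(x) = A(x, λ_j(x)), ∂_λ B(x, λ_j(x)) ≠ 0, and z_j(x) ≠ 0. Then λ̇_j = (z_j − Q(λ_j) z_j^{−1}) / B'(λ_j) and ż_j = (P'(λ_j) z_j − Q'(λ_j)) / B'(λ_j), where the prime denotes ∂/∂λ evaluated at λ = λ_j(x) and the dot denotes d/dx. -/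

import Mathlib

/-- Adler's matrix V_n(λ) with rows (v_n, 1) and (λ + v_n², v_n), at position x. -/
noncomputable def adlerV (v : ℤ → ℝ → ℝ) (n : ℤ) (lam x : ℝ) : Matrix (Fin 2) (Fin 2) ℝ :=
  !![v n x, 1; lam + (v n x) ^ 2, v n x]

/-- Partial transition matrix: `transT v α lam x k = V_k(λ+β_{k-1}) ⋯ V_2(λ+β_1) V_1(λ)`,
where β_k = α_1 + ⋯ + α_k. -/
noncomputable def transT (v : ℤ → ℝ → ℝ) (α : ℤ → ℝ) (lam x : ℝ) :
    ℕ → Matrix (Fin 2) (Fin 2) ℝ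
  | 0 => 1
  | k + 1 =>
      adlerV v ((k : ℤ) + 1) (lam + ∑ i ∈ Finset.range k, α ((i : ℤ) + 1)) x
        * transT v α lam x k

/-- The "Lax" matrix L_n(μ) = !![0,1; μ + v_n² − v_n', 0]. -/
noncomputable def Lmat (v : ℤ → ℝ → ℝ) (n : ℤ) (μ x : ℝ) : Matrix (Fin 2) (Fin 2) ℝ :=
  !![0, 1; μ + (v n x) ^ 2 - deriv (v n) x, 0]

lemma entry_mul_deriv {f g : ℝ → Matrix (Fin 2) (Fin 2) ℝ} {f' g' : Matrix (Fin 2) (Fin 2) ℝ}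
    {x : ℝ}
    (hf : ∀ i j, HasDerivAt (fun y => f y i j) (f' i j) x)
    (hg : ∀ i j, HasDerivAt (fun y => g y i j) (g' i j) x) :
    ∀ i j, HasDerivAt (fun y => (f y * g y) i j) ((f' * g x + f x * g') i j) x := by
  intro i j
  have h : HasDerivAt (fun y => ∑ l, f y i l * g y l j)
      (∑ l, (f' i l * g x l j + f x i l * g' l j)) x :=
    HasDerivAt.fun_sum fun l _ => (hf i l).mul (hg l j)
  have e1 : (fun y => (f y * g y) i j) = fun y => ∑ l, f y i l * g y l j := by
    funext y; rw [Matrix.mul_apply]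
  rw [e1]
  convert h using 1
  simp [Matrix.add_apply, Matrix.mul_apply, Finset.sum_add_distrib]

lemma adlerV_hasDerivAt (v : ℤ → ℝ → ℝ) (α : ℤ → ℝ)
    (hsmooth : ∀ n : ℤ, ContDiff ℝ (⊤ : ℕ∞) (v n))
    (hchain : ∀ (n : ℤ) (x : ℝ),
      deriv (v n) x + deriv (v (n + 1)) x = (v (n + 1) x) ^ 2 - (v n x) ^ 2 + α n)
    (n : ℤ) (μ x : ℝ) :
    ∀ i j, HasDerivAt (fun y => adlerV v n μ y i j)
      ((Lmat v (n + 1) (μ + α n) x * adlerV v n μ x - adlerV v n μ x * Lmat v n μ x) i j) x := by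
  have hv : HasDerivAt (v n) (deriv (v n) x) x :=
    ((hsmooth n).differentiable (by simp) x).hasDerivAt
  have key : Lmat v (n + 1) (μ + α n) x * adlerV v n μ x - adlerV v n μ x * Lmat v n μ x
      = !![deriv (v n) x, 0; 2 * v n x * deriv (v n) x, deriv (v n) x] := by
    have hc := hchain n x
    ext i j
    fin_cases i <;> fin_cases j <;>
        simp only [Lmat, adlerV, Matrix.mul_apply, Fin.sum_univ_two, Matrix.sub_apply,
          Matrix.cons_val', Matrix.cons_val_zero, Matrix.cons_val_one, Matrix.head_cons,
          Matrix.empty_val', Matrix.cons_val_fin_one, Matrix.head_fin_const, Matrix.of_apply,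
          Fin.mk_zero, Fin.mk_one]
    · ring
    · ring
    · linear_combination (-(v n x)) * hc
    · linear_combination (-1 : ℝ) * hc
  intro i j
  rw [key]
  have h10 : HasDerivAt (fun y => μ + v n y ^ 2) (2 * v n x * deriv (v n) x) x := by
    have h := (hasDerivAt_const x μ).fun_add (hv.fun_pow 2)
    exact h.congr_deriv (by simp)
  fin_cases i <;> fin_cases j <;>
    simp only [adlerV, Matrix.cons_val', Matrix.cons_val_zero, Matrix.cons_val_one,
      Matrix.head_cons, Matrix.empty_val', Matrix.cons_val_fin_one, Matrix.head_fin_const,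
      Fin.mk_zero, Fin.mk_one, Matrix.of_apply]
  · exact hv
  · exact hasDerivAt_const x 1
  · exact h10
  · exact hv

lemma transT_hasDerivAt (v : ℤ → ℝ → ℝ) (α : ℤ → ℝ)
    (hsmooth : ∀ n : ℤ, ContDiff ℝ (⊤ : ℕ∞) (v n))
    (hchain : ∀ (n : ℤ) (x : ℝ),
      deriv (v n) x + deriv (v (n + 1)) x = (v (n + 1) x) ^ 2 - (v n x) ^ 2 + α n)
    (lam x : ℝ) :
    ∀ k : ℕ, ∀ i j, HasDerivAt (fun y => transT v α lam y k i j)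
      ((Lmat v ((k : ℤ) + 1) (lam + ∑ i ∈ Finset.range k, α ((i : ℤ) + 1)) x
          * transT v α lam x k
        - transT v α lam x k * Lmat v 1 lam x) i j) x := by
  intro k
  induction k with
  | zero =>
      intro i j
      have e : (fun y => transT v α lam y 0 i j) = fun _ => (1 : Matrix (Fin 2) (Fin 2) ℝ) i j :=
        rfl
      rw [e]
      simpa [transT] using hasDerivAt_const x ((1 : Matrix (Fin 2) (Fin 2) ℝ) i j)
  | succ k ih =>
      intro i j
      set β : ℝ := ∑ i ∈ Finset.range k, α ((i : ℤ) + 1) with hβ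
      have hV := adlerV_hasDerivAt v α hsmooth hchain ((k : ℤ) + 1) (lam + β) x
      have h := entry_mul_deriv hV ih i j
      have e : (fun y => transT v α lam y (k + 1) i j)
          = fun y => (adlerV v ((k : ℤ) + 1) (lam + β) y * transT v α lam y k) i j := rfl
      rw [e]
      convert h using 1
      have hsum : lam + ∑ i ∈ Finset.range (k + 1), α ((i : ℤ) + 1)
          = (lam + β) + α ((k : ℤ) + 1) := by
        rw [hβ, Finset.sum_range_succ]; ring
      have ecast : ((k + 1 : ℕ) : ℤ) + 1 = ((k : ℤ) + 1) + 1 := by push_cast; ring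
      have eT : transT v α lam x (k + 1)
          = adlerV v ((k : ℤ) + 1) (lam + β) x * transT v α lam x k := rfl
      rw [eT, hsum, ecast]
      set V := adlerV v ((k : ℤ) + 1) (lam + β) x
      set T := transT v α lam x k
      set L2 := Lmat v (((k : ℤ) + 1) + 1) ((lam + β) + α ((k : ℤ) + 1)) x
      set L1 := Lmat v ((k : ℤ) + 1) (lam + β) x
      set L0 := Lmat v 1 lam x
      have : L2 * (V * T) - V * T * L0 = (L2 * V - V * L1) * T + V * (L1 * T - T * L0) := by
        noncomm_ring
      rw [this]

lemma adlerV_contDiff (v : ℤ → ℝ → ℝ) (hsmooth : ∀ n : ℤ, ContDiff ℝ (⊤ : ℕ∞) (v n))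
    (n : ℤ) (c : ℝ) (i j : Fin 2) :
    ContDiff ℝ (⊤ : ℕ∞) (fun p : ℝ × ℝ => adlerV v n (p.2 + c) p.1 i j) := by
  have hv : ContDiff ℝ (⊤ : ℕ∞) (fun p : ℝ × ℝ => v n p.1) := (hsmooth n).comp contDiff_fst
  fin_cases i <;> fin_cases j <;>
    simp only [adlerV, Matrix.cons_val', Matrix.cons_val_zero, Matrix.cons_val_one,
      Matrix.head_cons, Matrix.empty_val', Matrix.cons_val_fin_one, Matrix.head_fin_const,
      Matrix.of_apply, Fin.mk_zero, Fin.mk_one]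
  · exact hv
  · exact contDiff_const
  · exact (contDiff_snd.add contDiff_const).add (hv.pow 2)
  · exact hv

lemma transT_contDiff (v : ℤ → ℝ → ℝ) (α : ℤ → ℝ)
    (hsmooth : ∀ n : ℤ, ContDiff ℝ (⊤ : ℕ∞) (v n)) :
    ∀ (k : ℕ) (i j : Fin 2),
      ContDiff ℝ (⊤ : ℕ∞) (fun p : ℝ × ℝ => transT v α p.2 p.1 k i j) := by
  intro k
  induction k with
  | zero => intro i j; exact contDiff_const
  | succ k ih =>
      intro i j
      have e : (fun p : ℝ × ℝ => transT v α p.2 p.1 (k + 1) i j)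
          = fun p : ℝ × ℝ => ∑ l, adlerV v ((k : ℤ) + 1)
              (p.2 + ∑ i ∈ Finset.range k, α ((i : ℤ) + 1)) p.1 i l
              * transT v α p.2 p.1 k l j := by
        funext p; rw [show transT v α p.2 p.1 (k+1) = adlerV v ((k : ℤ) + 1)
          (p.2 + ∑ i ∈ Finset.range k, α ((i : ℤ) + 1)) p.1 * transT v α p.2 p.1 k from rfl,
          Matrix.mul_apply]
      rw [e]
      exact ContDiff.sum fun l _ => (adlerV_contDiff v hsmooth _ _ i l).mul (ih l j)

/-- Proposition 1: if B(x, λ_j(x)) = 0, z_j(x) = A(x, λ_j(x)),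
∂_λB(x, λ_j(x)) ≠ 0 and z_j(x) ≠ 0 on an open interval, then
λ̇_j = (z_j − Q(λ_j) z_j⁻¹)/B'(λ_j) and ż_j = (P'(λ_j) z_j − Q'(λ_j))/B'(λ_j). -/
theorem dressing_chain_spectral_darboux_flow (N : ℕ) (hN : 3 ≤ N)
    (v : ℤ → ℝ → ℝ) (α : ℤ → ℝ)
    (hsmooth : ∀ n : ℤ, ContDiff ℝ (⊤ : ℕ∞) (v n))
    (hvper : ∀ n : ℤ, v (n + (N : ℤ)) = v n)
    (hαper : ∀ n : ℤ, α (n + (N : ℤ)) = α n)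
    (hchain : ∀ (n : ℤ) (x : ℝ),
      deriv (v n) x + deriv (v (n + 1)) x = (v (n + 1) x) ^ 2 - (v n x) ^ 2 + α n)
    (a b : ℝ) (lamj zj : ℝ → ℝ)
    (hdiff : ∀ x ∈ Set.Ioo a b, DifferentiableAt ℝ lamj x ∧ DifferentiableAt ℝ zj x)
    (hBzero : ∀ x ∈ Set.Ioo a b, transT v α (lamj x) x N 0 1 = 0)
    (hzA : ∀ x ∈ Set.Ioo a b, zj x = transT v α (lamj x) x N 0 0)
    (hBp : ∀ x ∈ Set.Ioo a b, deriv (fun t => transT v α t x N 0 1) (lamj x) ≠ 0)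
    (hz0 : ∀ x ∈ Set.Ioo a b, zj x ≠ 0) :
    ∀ x ∈ Set.Ioo a b,
      deriv lamj x
          = (zj x - (transT v α (lamj x) x N).det / zj x)
            / deriv (fun t => transT v α t x N 0 1) (lamj x) ∧
      deriv zj x
          = (deriv (fun t => Matrix.trace (transT v α t x N)) (lamj x) * zj x
              - deriv (fun t => (transT v α t x N).det) (lamj x))
            / deriv (fun t => transT v α t x N 0 1) (lamj x) := by
  intro x hx
  -- joint fderiv of each entry
  set D2 : Fin 2 → Fin 2 → (ℝ × ℝ →L[ℝ] ℝ) := fun i j =>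
    fderiv ℝ (fun p : ℝ × ℝ => transT v α p.2 p.1 N i j) (x, lamj x) with hD2
  have hFD : ∀ i j, HasFDerivAt (fun p : ℝ × ℝ => transT v α p.2 p.1 N i j) (D2 i j)
      (x, lamj x) := fun i j =>
    ((transT_contDiff v α hsmooth N i j).differentiable (by simp) _).hasFDerivAt
  -- curves
  have c1 : HasDerivAt (fun y : ℝ => (y, lamj x)) ((1 : ℝ), (0 : ℝ)) x :=
    (hasDerivAt_id x).prodMk (hasDerivAt_const x (lamj x))
  have c2 : HasDerivAt (fun t : ℝ => (x, t)) ((0 : ℝ), (1 : ℝ)) (lamj x) :=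
    (hasDerivAt_const (lamj x) x).prodMk (hasDerivAt_id (lamj x))
  have c3 : HasDerivAt (fun y : ℝ => (y, lamj y)) ((1 : ℝ), deriv lamj x) x :=
    (hasDerivAt_id x).prodMk ((hdiff x hx).1.hasDerivAt)
  have hx1 : ∀ i j, HasDerivAt (fun y => transT v α (lamj x) y N i j) (D2 i j (1, 0)) x :=
    fun i j => by have h := (hFD i j).comp_hasDerivAt x c1; exact h
  have hx2 : ∀ i j, HasDerivAt (fun t => transT v α t x N i j) (D2 i j (0, 1)) (lamj x) :=
    fun i j => (hFD i j).comp_hasDerivAt (lamj x) c2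
  have hx3 : ∀ i j, HasDerivAt (fun y => transT v α (lamj y) y N i j)
      (D2 i j (1, deriv lamj x)) x :=
    fun i j => by have h := (hFD i j).comp_hasDerivAt x c3; exact h
  have hlin : ∀ i j, D2 i j (1, deriv lamj x) = D2 i j (1, 0) + deriv lamj x * D2 i j (0, 1) := by
    intro i j
    have e : ((1 : ℝ), deriv lamj x) = ((1 : ℝ), (0 : ℝ)) + deriv lamj x • ((0 : ℝ), (1 : ℝ)) := by
      simp
    rw [e, map_add, map_smul, smul_eq_mul]
  -- x-partials from zero curvature
  have hX := transT_hasDerivAt v α hsmooth hchain (lamj x) x N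
  have hpx : ∀ i j, D2 i j (1, 0)
      = ((Lmat v ((N : ℤ) + 1) (lamj x + ∑ i ∈ Finset.range N, α ((i : ℤ) + 1)) x
          * transT v α (lamj x) x N
          - transT v α (lamj x) x N * Lmat v 1 (lamj x) x) i j) :=
    fun i j => (hx1 i j).unique (hX i j)
  set TA := transT v α (lamj x) x N 0 0 with hTA
  set TB := transT v α (lamj x) x N 0 1 with hTB
  set TC := transT v α (lamj x) x N 1 0 with hTC
  set TD := transT v α (lamj x) x N 1 1 with hTD
  have hB : TB = 0 := hBzero x hx
  have hz : zj x = TA := hzA x hx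
  have hM01 : D2 0 1 (1, 0) = TD - TA := by
    rw [hpx 0 1, Matrix.sub_apply, Matrix.mul_apply, Matrix.mul_apply, Fin.sum_univ_two,
      Fin.sum_univ_two]
    simp [Lmat]
    rfl
  have hM00 : D2 0 0 (1, 0) = TC := by
    rw [hpx 0 0, Matrix.sub_apply, Matrix.mul_apply, Matrix.mul_apply, Fin.sum_univ_two,
      Fin.sum_univ_two]
    simp [Lmat, hBzero x hx]
    rfl
  -- B ≡ 0 along the curve
  have hBcurve : (fun y => transT v α (lamj y) y N 0 1) =ᶠ[nhds x] fun _ => (0 : ℝ) := by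
    filter_upwards [isOpen_Ioo.mem_nhds hx] with y hy using hBzero y hy
  have hB0 : D2 0 1 (1, deriv lamj x) = 0 := by
    have h1 : HasDerivAt (fun y => transT v α (lamj y) y N 0 1) 0 x :=
      (hasDerivAt_const x (0 : ℝ)).congr_of_eventuallyEq hBcurve
    exact (hx3 0 1).unique h1
  -- z along the curve
  have hzcurve : zj =ᶠ[nhds x] fun y => transT v α (lamj y) y N 0 0 := by
    filter_upwards [isOpen_Ioo.mem_nhds hx] with y hy using hzA y hy
  have hzd : deriv zj x = D2 0 0 (1, deriv lamj x) :=
    ((hx3 0 0).congr_of_eventuallyEq hzcurve).deriv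
  -- λ-partials names
  have hd01 : deriv (fun t => transT v α t x N 0 1) (lamj x) = D2 0 1 (0, 1) := (hx2 0 1).deriv
  have hbp : D2 0 1 (0, 1) ≠ 0 := by rw [← hd01]; exact hBp x hx
  -- trace and det derivatives in λ
  have htr : deriv (fun t => Matrix.trace (transT v α t x N)) (lamj x)
      = D2 0 0 (0, 1) + D2 1 1 (0, 1) := by
    have e : (fun t => Matrix.trace (transT v α t x N))
        = fun t => transT v α t x N 0 0 + transT v α t x N 1 1 := by
      funext t; exact Matrix.trace_fin_two _
    rw [e]
    exact ((hx2 0 0).add (hx2 1 1)).deriv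
  have hdet : deriv (fun t => (transT v α t x N).det) (lamj x)
      = D2 0 0 (0, 1) * TD + TA * D2 1 1 (0, 1)
        - (D2 0 1 (0, 1) * TC + TB * D2 1 0 (0, 1)) := by
    have e : (fun t => (transT v α t x N).det)
        = fun t => transT v α t x N 0 0 * transT v α t x N 1 1
            - transT v α t x N 0 1 * transT v α t x N 1 0 := by
      funext t; exact Matrix.det_fin_two _
    rw [e]
    exact (((hx2 0 0).mul (hx2 1 1)).sub ((hx2 0 1).mul (hx2 1 0))).deriv
  have hdetval : (transT v α (lamj x) x N).det = TA * TD - TB * TC := Matrix.det_fin_two _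
  -- key scalar relations
  have hrel1 : (TD - TA) + deriv lamj x * D2 0 1 (0, 1) = 0 := by
    rw [← hM01, ← hlin 0 1, hB0]
  have hrel2 : deriv zj x = TC + deriv lamj x * D2 0 0 (0, 1) := by
    rw [hzd, hlin 0 0, hM00]
  have hz0' : zj x ≠ 0 := hz0 x hx
  have hTA0 : TA ≠ 0 := hz ▸ hz0'
  constructor
  · rw [hd01, hdetval, hB, hz]
    field_simp
    linear_combination TA * hrel1
  · rw [hd01, htr, hdet, hB, hz]
    field_simp
    linear_combination (D2 0 0 (0, 1)) * hrel1 + (D2 0 1 (0, 1)) * hrel2
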